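/- Let p be an odd prime and let Q denote the set of nonzero squares of F_p. Then | Σ_{x ∈ Q} ν(x) − p(p−1)/4 | ≤ 0 if p ≡ 1 (mod 4) (i.e. Σ_{x ∈ Q} ν(x) = p(p−1)/4 in that case), ≤ (1/2)·p·√p·ln(p) if p ≡ 7 (mod 8), and ≤ (1/6)·p·√p·ln(p) if p ≡ 3 (mod 8), where the inequalities are over the real numbers. -/

import Mathlib

/-!
Let `χ` be the Legendre symbol mod `p`. Since `2 ∑_{x ∈ Q} ν(x) = ∑_{0 < k < p} k (1 + χ k)`, the
deviation from `p(p-1)/4` is `A/2` with `A = ∑_{0 < k < p} k χ k`. Put `S = ∑_{0 < k < p/2} χ k` and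
`T = ∑_{0 < k < p/2} k χ k`. Pairing `k` with `p - k` gives `A = p S` if `χ(-1) = 1` (and then
`S = 0`, since `χ` sums to `0`), and `A = 2T - p S` if `χ(-1) = -1`. Pairing `2b` with `p - 2b`
gives `A = χ(2) (4T - p S)`. Eliminating `T` leaves `A = -p S` if `χ(2) = 1` and `3A = -p S`
if `χ(2) = -1`.

The bound `|S| ≤ √p log p` is Pólya–Vinogradov. Multiplying `S` by a Gauss sum of modulus `√p`
gives `∑_a χ̄(a) ∑_{t ≤ N} e(at/p)`. Each geometric sum over `t` is at most `1 / sin(π a/p)`,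
and `1/sin x ≤ 1/x + x/3` bounds `∑_{0 < a < p} 1 / sin(π a/p)` by `p log p`.
-/

open Finset Real

section Reflection

variable {M : Type*} [AddCommMonoid M]

theorem sum_Icc_two_mul_eq_sum_add_reflect (m : ℕ) (f : ℕ → M) :
    ∑ k ∈ Icc 1 (2 * m), f k = ∑ b ∈ Icc 1 m, (f b + f (2 * m + 1 - b)) := by
  have hsplit : Icc 1 (2 * m) = Icc 1 m ∪ Icc (m + 1) (2 * m) := by
    ext k; simp only [mem_Icc, mem_union]; omega
  rw [hsplit, sum_union (disjoint_left.2 fun k hk hk' => by simp only [mem_Icc] at hk hk'; omega),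
    sum_add_distrib]
  congr 1
  refine sum_nbij' (fun k => 2 * m + 1 - k) (fun b => 2 * m + 1 - b) ?_ ?_ ?_ ?_ ?_ <;>
    simp only [mem_Icc] <;> intros <;> first | omega | (congr 1; omega)

theorem sum_Icc_two_mul_eq_sum_even_add_odd (m : ℕ) (f : ℕ → M) :
    ∑ k ∈ Icc 1 (2 * m), f k = ∑ b ∈ Icc 1 m, (f (2 * b) + f (2 * m + 1 - 2 * b)) := by
  rw [← sum_filter_add_sum_filter_not _ Even, sum_add_distrib]
  congr 1
  · refine sum_nbij' (· / 2) (2 * ·) ?_ ?_ ?_ ?_ ?_ <;>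
      simp only [mem_filter, mem_Icc, Nat.even_iff] <;> intros <;> first | omega | (congr 1; omega)
  · refine sum_nbij' (fun k => (2 * m + 1 - k) / 2) (fun b => 2 * m + 1 - 2 * b) ?_ ?_ ?_ ?_ ?_ <;>
      simp only [mem_filter, mem_Icc, Nat.even_iff] <;> intros <;> first | omega | (congr 1; omega)

end Reflection

section WeightedSums

variable {R : Type*} [CommRing R] {m : ℕ} {f : ℕ → R}

theorem sum_Icc_two_mul_of_reflect_eq (hf : ∀ k ≤ 2 * m, f (2 * m + 1 - k) = f k) :
    ∑ k ∈ Icc 1 (2 * m), f k = 2 * ∑ b ∈ Icc 1 m, f b := by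
  rw [sum_Icc_two_mul_eq_sum_add_reflect, mul_sum]
  refine sum_congr rfl fun b hb => ?_
  rw [hf b (by simp only [mem_Icc] at hb; omega)]
  ring

theorem sum_Icc_two_mul_natCast_mul_of_reflect_eq (hf : ∀ k ≤ 2 * m, f (2 * m + 1 - k) = f k) :
    ∑ k ∈ Icc 1 (2 * m), (k : R) * f k = (2 * m + 1) * ∑ b ∈ Icc 1 m, f b := by
  rw [sum_Icc_two_mul_eq_sum_add_reflect, mul_sum]
  refine sum_congr rfl fun b hb => ?_
  simp only [mem_Icc] at hb
  rw [hf b (by omega), Nat.cast_sub (by omega)]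
  push_cast
  ring

theorem sum_Icc_two_mul_natCast_mul_of_reflect_eq_neg
    (hf : ∀ k ≤ 2 * m, f (2 * m + 1 - k) = -f k) :
    ∑ k ∈ Icc 1 (2 * m), (k : R) * f k =
      2 * ∑ b ∈ Icc 1 m, (b : R) * f b - (2 * m + 1) * ∑ b ∈ Icc 1 m, f b := by
  rw [sum_Icc_two_mul_eq_sum_add_reflect, mul_sum, mul_sum, ← sum_sub_distrib]
  refine sum_congr rfl fun b hb => ?_
  simp only [mem_Icc] at hb
  rw [hf b (by omega), Nat.cast_sub (by omega)]
  push_cast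
  ring

theorem sum_Icc_two_mul_natCast_mul_of_reflect_eq_neg_of_two_mul {c : R}
    (hf : ∀ k ≤ 2 * m, f (2 * m + 1 - k) = -f k) (h2 : ∀ b, f (2 * b) = c * f b) :
    ∑ k ∈ Icc 1 (2 * m), (k : R) * f k =
      c * (4 * ∑ b ∈ Icc 1 m, (b : R) * f b - (2 * m + 1) * ∑ b ∈ Icc 1 m, f b) := by
  rw [sum_Icc_two_mul_eq_sum_even_add_odd, mul_sum, mul_sum, ← sum_sub_distrib, mul_sum]
  refine sum_congr rfl fun b hb => ?_
  simp only [mem_Icc] at hb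
  rw [hf (2 * b) (by omega), h2, Nat.cast_sub (by omega)]
  push_cast
  ring

theorem one_sub_two_mul_mul_sum_Icc_two_mul_natCast_mul {c : R}
    (hf : ∀ k ≤ 2 * m, f (2 * m + 1 - k) = -f k) (h2 : ∀ b, f (2 * b) = c * f b) :
    (1 - 2 * c) * ∑ k ∈ Icc 1 (2 * m), (k : R) * f k = c * (2 * m + 1) * ∑ b ∈ Icc 1 m, f b := by
  linear_combination sum_Icc_two_mul_natCast_mul_of_reflect_eq_neg_of_two_mul hf h2 -
    2 * c * sum_Icc_two_mul_natCast_mul_of_reflect_eq_neg hf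

end WeightedSums

theorem MulChar.map_natCast_sub {n : ℕ} {R : Type*} [CommRing R] (χ : MulChar (ZMod n) R)
    {k : ℕ} (hk : k ≤ n) : χ ((n - k : ℕ) : ZMod n) = χ (-1) * χ k := by
  rw [Nat.cast_sub hk, ZMod.natCast_self, zero_sub, neg_eq_neg_one_mul, map_mul]

theorem ZMod.sum_val_eq_add_sum_Icc {M : Type*} [AddCommMonoid M] (n : ℕ) (f : ℕ → M) :
    ∑ x : ZMod (n + 1), f x.val = f 0 + ∑ k ∈ Icc 1 n, f k := by
  rw [← Ico_add_one_right_eq_Icc, ← sum_range_eq_add_Ico f (by omega : 0 < n + 1)]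
  -- `ZMod (n + 1)` is `Fin (n + 1)` by definition.
  exact Fin.sum_univ_eq_sum_range f (n + 1)

theorem MulChar.sum_Icc_eq_zero_of_ne_one {n : ℕ} {R : Type*} [CommRing R] [IsDomain R]
    {χ : MulChar (ZMod (n + 1)) R} (hχ : χ ≠ 1) : ∑ k ∈ Icc 1 n, χ k = 0 := by
  rcases n.eq_zero_or_pos with rfl | hn
  · simp
  -- makes `ZMod (n + 1)` nontrivial, so that `χ 0 = 0`
  have : Fact (1 < n + 1) := ⟨by omega⟩
  have h := ZMod.sum_val_eq_add_sum_Icc n fun k => χ k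
  simp only [ZMod.natCast_zmod_val, χ.sum_eq_zero_of_ne_one hχ, Nat.cast_zero, MulChar.map_zero,
    zero_add] at h
  exact h.symm

theorem inv_sin_le_inv_add_div_three {x : ℝ} (hx : 0 < x) (hx3 : x ^ 2 ≤ 3) :
    (sin x)⁻¹ ≤ x⁻¹ + x / 3 := by
  have hcube := sin_ge_sub_cube hx.le
  have hcube_pos : 0 < x - x ^ 3 / 6 := by nlinarith
  have hx_inv : x⁻¹ * x = 1 := inv_mul_cancel₀ hx.ne'
  rw [inv_le_iff_one_le_mul₀ (hcube_pos.trans_le hcube)]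
  -- `(x⁻¹ + x / 3) * (x - x ^ 3 / 6) = 1 + x ^ 2 * (3 - x ^ 2) / 18`
  calc 1 ≤ (x⁻¹ + x / 3) * (x - x ^ 3 / 6) := by nlinarith
    _ ≤ (x⁻¹ + x / 3) * sin x := by gcongr

theorem sum_Icc_natCast_eq (m : ℕ) : ∑ b ∈ Icc 1 m, (b : ℝ) = m * (m + 1) / 2 := by
  induction m with
  | zero => simp
  | succ m ih =>
    rw [sum_Icc_succ_top (by omega), ih]
    push_cast
    ring

theorem two_div_pi_mul_one_add_log_add_pi_div_twelve_le_log {m : ℕ} (hm : 1 ≤ m) :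
    2 / π * (1 + log m) + π / 12 ≤ log (2 * m + 1) := by
  have hπ₁ := pi_gt_d2
  have hπ₂ := pi_lt_d2
  have hu₁ : 2 / π < 0.64 := by rw [div_lt_iff₀ pi_pos]; linarith
  rcases hm.eq_or_lt with rfl | hm2
  · have hlog3 : 1 < log 3 := by
      rw [lt_log_iff_exp_lt (by norm_num)]
      linarith [exp_one_lt_d9]
    norm_num
    linarith
  · have hlog2 := log_two_gt_d9
    have hm0 : (0 : ℝ) < m := by positivity
    have hlogm : log 2 ≤ log m := log_le_log two_pos (by exact_mod_cast hm2)
    have hsplit : log 2 + log m ≤ log (2 * m + 1) := by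
      rw [← log_mul two_ne_zero hm0.ne']
      exact log_le_log (by positivity) (by linarith)
    nlinarith [mul_le_mul_of_nonneg_right hu₁.le (by linarith : (0 : ℝ) ≤ 1 + log m)]

theorem sum_Icc_inv_sin_pi_mul_div_le {m : ℕ} (hm : 1 ≤ m) :
    ∑ k ∈ Icc 1 (2 * m), (sin (π * k / (2 * m + 1)))⁻¹ ≤ (2 * m + 1) * log (2 * m + 1) := by
  set p : ℝ := 2 * m + 1 with hp
  have hp0 : 0 < p := by positivity
  have hreflect :
      ∀ k ≤ 2 * m, (sin (π * ((2 * m + 1 - k : ℕ) : ℝ) / p))⁻¹ = (sin (π * k / p))⁻¹ := by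
    intro k hk
    rw [Nat.cast_sub (by omega), ← sin_pi_sub]
    congr 2
    push_cast
    field_simp
    ring
  have hterm : ∀ b ∈ Icc 1 m, (sin (π * b / p))⁻¹ ≤ p / π * (b : ℝ)⁻¹ + π / (3 * p) * b := by
    intro b hb
    simp only [mem_Icc] at hb
    have hb0 : (0 : ℝ) < b := by exact_mod_cast hb.1
    have hbm : 2 * (b : ℝ) ≤ p := by
      have : (b : ℝ) ≤ m := by exact_mod_cast hb.2
      linarith
    have hx3 : (π * b / p) ^ 2 ≤ 3 := by
      have hπb : π * b ≤ π / 2 * p := by nlinarith [pi_pos]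
      rw [div_pow, div_le_iff₀ (by positivity)]
      calc (π * b) ^ 2 ≤ (π / 2 * p) ^ 2 := by gcongr
        _ = π ^ 2 / 4 * p ^ 2 := by ring
        _ ≤ 3 * p ^ 2 := by gcongr; nlinarith [pi_lt_d2, pi_pos]
    calc _ ≤ (π * b / p)⁻¹ + π * b / p / 3 := inv_sin_le_inv_add_div_three (by positivity) hx3
      _ = _ := by field_simp
  have hharmonic : ∑ b ∈ Icc 1 m, (b : ℝ)⁻¹ ≤ 1 + log m := by
    simpa [harmonic_eq_sum_Icc] using harmonic_le_one_add_log m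
  have hgauss : (m : ℝ) * (m + 1) / 2 ≤ p ^ 2 / 8 := by rw [hp]; nlinarith
  rw [sum_Icc_two_mul_of_reflect_eq hreflect]
  calc 2 * ∑ b ∈ Icc 1 m, (sin (π * b / p))⁻¹
      ≤ 2 * (p / π * ∑ b ∈ Icc 1 m, (b : ℝ)⁻¹ + π / (3 * p) * ∑ b ∈ Icc 1 m, (b : ℝ)) := by
        gcongr 2 * ?_
        rw [mul_sum, mul_sum, ← sum_add_distrib]
        exact sum_le_sum hterm
    _ ≤ 2 * (p / π * (1 + log m) + π / (3 * p) * (p ^ 2 / 8)) := by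
        rw [sum_Icc_natCast_eq]
        gcongr
    _ = p * (2 / π * (1 + log m) + π / 12) := by field_simp; ring
    _ ≤ p * log p := by
        gcongr
        exact two_div_pi_mul_one_add_log_add_pi_div_twelve_le_log hm

theorem norm_sum_Icc_pow_le {K : Type*} [NormedField K] {w : K} (hw : ‖w‖ = 1) (hw1 : w ≠ 1)
    (N : ℕ) : ‖∑ t ∈ Icc 1 N, w ^ t‖ ≤ 2 / ‖w - 1‖ := by
  have hgeom := geom_sum_Ico_mul w (by omega : 1 ≤ N + 1)
  rw [Ico_add_one_right_eq_Icc, pow_one] at hgeom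
  rw [le_div_iff₀ (norm_pos_iff.2 (sub_ne_zero.2 hw1)), ← norm_mul, hgeom]
  calc ‖w ^ (N + 1) - w‖ ≤ ‖w ^ (N + 1)‖ + ‖w‖ := norm_sub_le _ _
    _ = 2 := by rw [norm_pow, hw]; norm_num

theorem ZMod.norm_stdAddChar_sub_one {n : ℕ} [NeZero n] (a : ZMod n) :
    ‖ZMod.stdAddChar a - 1‖ = 2 * sin (π * a.val / n) := by
  have hn : (0 : ℝ) < n := Nat.cast_pos.2 (NeZero.pos n)
  have harg : Complex.exp (2 * π * Complex.I * a.val / n) =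
      Complex.exp (Complex.I * ((2 * π * a.val / n : ℝ) : ℂ)) := by
    push_cast; ring_nf
  rw [ZMod.stdAddChar_apply, ZMod.toCircle_apply, harg, Complex.norm_exp_I_mul_ofReal_sub_one,
    show 2 * π * a.val / n / 2 = π * a.val / n by ring, Real.norm_eq_abs,
    abs_of_nonneg]
  refine mul_nonneg zero_le_two (sin_nonneg_of_nonneg_of_le_pi (by positivity) ?_)
  rw [div_le_iff₀ hn]
  have : (a.val : ℝ) ≤ n := by exact_mod_cast (ZMod.val_lt a).le
  nlinarith [pi_pos]

theorem ZMod.norm_sum_Icc_stdAddChar_mul_le {n : ℕ} [NeZero n] {a : ZMod n} (ha : a ≠ 0)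
    (N : ℕ) : ‖∑ t ∈ Icc 1 N, ZMod.stdAddChar ((t : ZMod n) * a)‖ ≤
      (sin (π * a.val / n))⁻¹ := by
  have hne : ZMod.stdAddChar a ≠ 1 := by
    rwa [← AddChar.map_zero_eq_one (ZMod.stdAddChar (N := n)),
      (ZMod.injective_stdAddChar (N := n)).ne_iff]
  simp_rw [← nsmul_eq_mul, AddChar.map_nsmul_eq_pow]
  calc _ ≤ 2 / ‖ZMod.stdAddChar a - 1‖ := norm_sum_Icc_pow_le (Circle.norm_coe _) hne N
    _ = _ := by rw [ZMod.norm_stdAddChar_sub_one]; field_simp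

section GaussSum

variable {F : Type*} [Field F] [Fintype F]

theorem norm_gaussSum_eq_sqrt {χ : MulChar F ℂ} (hχ : χ ≠ 1) {ψ : AddChar F ℂ}
    (hψ : ψ.IsPrimitive) : ‖gaussSum χ ψ‖ = √(Fintype.card F) := by
  have hsq : (‖gaussSum χ ψ‖ : ℂ) ^ 2 = Fintype.card F := by
    rw [← Complex.mul_conj', ← Complex.star_def, star_gaussSum_eq,
      gaussSum_mul_gaussSum_eq_card hχ hψ]
  rw [← Real.sqrt_sq (norm_nonneg _)]
  exact congrArg _ (by exact_mod_cast hsq)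

theorem gaussSum_mulShift_of_ne_one {R : Type*} [CommRing R] [IsDomain R] {χ : MulChar F R}
    (hχ : χ ≠ 1) (ψ : AddChar F R) (a : F) :
    gaussSum χ (ψ.mulShift a) = χ⁻¹ a * gaussSum χ ψ := by
  rcases eq_or_ne a 0 with rfl | ha
  · simp [gaussSum, MulChar.map_zero, MulChar.sum_eq_zero_of_ne_one hχ]
  · exact gaussSum_mulShift_eq χ ψ (Units.mk0 a ha)

end GaussSum

/-- The `x = 0` summand on the right is `(sin 0)⁻¹ = 0`. -/
theorem norm_sum_Icc_mul_sqrt_le_sum_inv_sin {p : ℕ} [Fact p.Prime] {χ : DirichletCharacter ℂ p}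
    (hχ : χ ≠ 1) (N : ℕ) :
    ‖∑ t ∈ Icc 1 N, χ t‖ * √p ≤ ∑ x : ZMod p, (sin (π * x.val / p))⁻¹ := by
  set ψ : AddChar (ZMod p) ℂ := ZMod.stdAddChar
  have hχinv : χ⁻¹ ≠ 1 := inv_ne_one.2 hχ
  have hg : ‖gaussSum χ⁻¹ ψ‖ = √p := by
    rw [norm_gaussSum_eq_sqrt hχinv (ZMod.isPrimitive_stdAddChar p), ZMod.card]
  have hexpand : (∑ t ∈ Icc 1 N, χ t) * gaussSum χ⁻¹ ψ =
      ∑ x : ZMod p, χ⁻¹ x * ∑ t ∈ Icc 1 N, ψ ((t : ZMod p) * x) := by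
    calc (∑ t ∈ Icc 1 N, χ t) * gaussSum χ⁻¹ ψ
        = ∑ t ∈ Icc 1 N, gaussSum χ⁻¹ (ψ.mulShift t) := by
          simp_rw [sum_mul, gaussSum_mulShift_of_ne_one hχinv, inv_inv]
      _ = _ := by
          simp_rw [gaussSum, AddChar.mulShift_apply, mul_sum]
          exact sum_comm
  rw [← hg, ← norm_mul, hexpand]
  refine (norm_sum_le _ _).trans (sum_le_sum fun x _ => ?_)
  rcases eq_or_ne x 0 with rfl | hx
  · simp [MulChar.map_zero]
  rw [norm_mul]
  calc _ ≤ 1 * (sin (π * x.val / p))⁻¹ :=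
        mul_le_mul (χ⁻¹.norm_le_one x) (ZMod.norm_sum_Icc_stdAddChar_mul_le hx N)
          (norm_nonneg _) zero_le_one
    _ = _ := one_mul _

theorem norm_sum_Icc_le_sqrt_mul_log {p : ℕ} [Fact p.Prime] (hp : Odd p)
    {χ : DirichletCharacter ℂ p} (hχ : χ ≠ 1) (N : ℕ) :
    ‖∑ t ∈ Icc 1 N, χ t‖ ≤ √p * log p := by
  obtain ⟨m, rfl⟩ := hp
  have hm : 1 ≤ m := by have := (Fact.out : (2 * m + 1).Prime).two_le; omega
  have h := norm_sum_Icc_mul_sqrt_le_sum_inv_sin hχ N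
  rw [ZMod.sum_val_eq_add_sum_Icc (2 * m) fun k => (sin (π * k / ((2 * m + 1 : ℕ) : ℝ)))⁻¹] at h
  push_cast at h ⊢
  simp only [mul_zero, zero_div, sin_zero, inv_zero, zero_add] at h
  have hsqrt : 0 < √(2 * (m : ℝ) + 1) := by positivity
  refine le_of_mul_le_mul_right ?_ hsqrt
  calc _ ≤ _ := h.trans (sum_Icc_inv_sin_pi_mul_div_le hm)
    _ = √(2 * (m : ℝ) + 1) * log (2 * m + 1) * √(2 * (m : ℝ) + 1) := by
      rw [mul_right_comm, mul_self_sqrt (by positivity)]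

theorem ZMod.ringChar_ne_two {p : ℕ} (hp : p ≠ 2) : ringChar (ZMod p) ≠ 2 := by
  rwa [ZMod.ringChar_zmod_n]

section QuadraticChar

variable {p : ℕ} [Fact p.Prime]

theorem quadraticChar_natCast_sub (hp : p ≠ 2) {k : ℕ} (hk : k ≤ p) :
    quadraticChar (ZMod p) ((p - k : ℕ) : ZMod p) = ZMod.χ₄ p * quadraticChar (ZMod p) k := by
  rw [MulChar.map_natCast_sub _ hk, quadraticChar_neg_one (ZMod.ringChar_ne_two hp), ZMod.card]

theorem quadraticChar_natCast_two_mul (hp : p ≠ 2) (b : ℕ) :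
    quadraticChar (ZMod p) ((2 * b : ℕ) : ZMod p) = ZMod.χ₈ p * quadraticChar (ZMod p) b := by
  rw [Nat.cast_mul, Nat.cast_ofNat, map_mul, quadraticChar_two (ZMod.ringChar_ne_two hp),
    ZMod.card]

end QuadraticChar

section WeightedQuadraticCharSums

variable {m : ℕ} [Fact (2 * m + 1).Prime]

theorem sum_Icc_natCast_mul_quadraticChar_of_mod_four_eq_one (h : (2 * m + 1) % 4 = 1) :
    ∑ k ∈ Icc 1 (2 * m), (k : ℝ) * quadraticChar (ZMod (2 * m + 1)) k = 0 := by
  have hf : ∀ k ≤ 2 * m, (quadraticChar (ZMod (2 * m + 1)) ((2 * m + 1 - k : ℕ)) : ℝ) =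
      quadraticChar (ZMod (2 * m + 1)) k := fun k hk => by
    rw [quadraticChar_natCast_sub (by omega) (by omega), ZMod.χ₄_nat_one_mod_four h, one_mul]
  have hsum : ∑ k ∈ Icc 1 (2 * m), (quadraticChar (ZMod (2 * m + 1)) k : ℝ) = 0 := by
    exact_mod_cast MulChar.sum_Icc_eq_zero_of_ne_one
      (quadraticChar_ne_one (ZMod.ringChar_ne_two (by omega)))
  rw [sum_Icc_two_mul_of_reflect_eq hf, mul_eq_zero] at hsum
  rw [sum_Icc_two_mul_natCast_mul_of_reflect_eq hf, hsum.resolve_left two_ne_zero, mul_zero]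

theorem one_sub_two_mul_mul_sum_Icc_natCast_mul_quadraticChar (h : (2 * m + 1) % 4 = 3) :
    (1 - 2 * ZMod.χ₈ (2 * m + 1 : ℕ)) *
        ∑ k ∈ Icc 1 (2 * m), (k : ℝ) * quadraticChar (ZMod (2 * m + 1)) k =
      ZMod.χ₈ (2 * m + 1 : ℕ) * (2 * m + 1) *
        ∑ b ∈ Icc 1 m, (quadraticChar (ZMod (2 * m + 1)) b : ℝ) := by
  refine one_sub_two_mul_mul_sum_Icc_two_mul_natCast_mul (fun k hk => ?_) fun b => ?_
  · rw [quadraticChar_natCast_sub (by omega) (by omega), ZMod.χ₄_nat_three_mod_four h]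
    push_cast
    ring
  · rw [quadraticChar_natCast_two_mul (by omega)]
    push_cast
    rfl

theorem sum_Icc_natCast_mul_quadraticChar_of_mod_eight_eq_seven (h : (2 * m + 1) % 8 = 7) :
    ∑ k ∈ Icc 1 (2 * m), (k : ℝ) * quadraticChar (ZMod (2 * m + 1)) k =
      -((2 * m + 1) * ∑ b ∈ Icc 1 m, (quadraticChar (ZMod (2 * m + 1)) b : ℝ)) := by
  have key := one_sub_two_mul_mul_sum_Icc_natCast_mul_quadraticChar (m := m) (by omega)
  rw [ZMod.χ₈_nat_eq_if_mod_eight, if_neg (by omega), if_pos (by omega)] at key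
  push_cast at key
  linear_combination -key

theorem sum_Icc_natCast_mul_quadraticChar_of_mod_eight_eq_three (h : (2 * m + 1) % 8 = 3) :
    ∑ k ∈ Icc 1 (2 * m), (k : ℝ) * quadraticChar (ZMod (2 * m + 1)) k =
      -((2 * m + 1) * ∑ b ∈ Icc 1 m, (quadraticChar (ZMod (2 * m + 1)) b : ℝ)) / 3 := by
  have key := one_sub_two_mul_mul_sum_Icc_natCast_mul_quadraticChar (m := m) (by omega)
  rw [ZMod.χ₈_nat_eq_if_mod_eight, if_neg (by omega), if_neg (by omega)] at key
  push_cast at key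
  linear_combination key / 3

end WeightedQuadraticCharSums

theorem two_mul_sum_val_nonzero_squares (p : ℕ) [Fact p.Prime] (R : Type*) [CommRing R] :
    2 * ((∑ x ∈ univ.filter fun x : ZMod p => x ≠ 0 ∧ IsSquare x, x.val : ℕ) : R) =
      ∑ x : ZMod p, (x.val : R) * (1 + quadraticChar (ZMod p) x) := by
  rw [Nat.cast_sum, mul_sum, sum_filter]
  refine sum_congr rfl fun x _ => ?_
  by_cases hx : x = 0
  · simp [hx]
  by_cases hsq : IsSquare x
  · rw [if_pos ⟨hx, hsq⟩, (quadraticChar_one_iff_isSquare hx).2 hsq]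
    push_cast
    ring
  · rw [if_neg (by tauto), quadraticChar_neg_one_iff_not_isSquare.2 hsq]
    push_cast
    ring

theorem sum_val_nonzero_squares_sub_eq (m : ℕ) [Fact (2 * m + 1).Prime] :
    ((∑ x ∈ univ.filter fun x : ZMod (2 * m + 1) => x ≠ 0 ∧ IsSquare x, x.val : ℕ) : ℝ) -
        ((2 * m + 1 : ℕ) : ℝ) * (((2 * m + 1 : ℕ) : ℝ) - 1) / 4 =
      (∑ k ∈ Icc 1 (2 * m), (k : ℝ) * quadraticChar (ZMod (2 * m + 1)) k) / 2 := by
  set g : ℕ → ℝ := fun k => k * (1 + quadraticChar (ZMod (2 * m + 1)) k)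
  have hval : ∑ x : ZMod (2 * m + 1), (x.val : ℝ) * (1 + quadraticChar (ZMod (2 * m + 1)) x) =
      ∑ x : ZMod (2 * m + 1), g x.val :=
    sum_congr rfl fun x _ => by simp only [g, ZMod.natCast_zmod_val]
  have hid : ∑ k ∈ Icc 1 (2 * m), (k : ℝ) * 1 = (2 * m + 1) * m := by
    rw [sum_Icc_two_mul_natCast_mul_of_reflect_eq (f := fun _ => 1) fun _ _ => rfl]
    simp
  have h2 := two_mul_sum_val_nonzero_squares (2 * m + 1) ℝ
  rw [hval, ZMod.sum_val_eq_add_sum_Icc (2 * m) g] at h2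
  simp only [g, mul_add, sum_add_distrib, hid, CharP.cast_eq_zero, zero_mul, zero_add] at h2
  push_cast at h2 ⊢
  linear_combination h2 / 2

theorem abs_sum_Icc_quadraticChar_le {p : ℕ} [Fact p.Prime] (hp : Odd p) (N : ℕ) :
    |∑ t ∈ Icc 1 N, (quadraticChar (ZMod p) t : ℝ)| ≤ √p * log p := by
  have hp2 : p ≠ 2 := by rintro rfl; exact (by decide : ¬ Odd 2) hp
  have hχ : (quadraticChar (ZMod p)).ringHomComp (Int.castRingHom ℂ) ≠ 1 :=
    (MulChar.ringHomComp_ne_one_iff (RingHom.injective_int _)).2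
      (quadraticChar_ne_one (ZMod.ringChar_ne_two hp2))
  have h := norm_sum_Icc_le_sqrt_mul_log hp hχ N
  simp only [MulChar.ringHomComp_apply, eq_intCast] at h
  rw [← Real.norm_eq_abs, ← Complex.norm_real]
  push_cast
  exact h

/-- Bounds on the sum of the least nonnegative residues of the nonzero squares of `F_p`:
the sum differs from `p(p−1)/4` by `0` if `p ≡ 1 (mod 4)`, by at most `(1/2)·p·√p·ln p`
if `p ≡ 7 (mod 8)`, and by at most `(1/6)·p·√p·ln p` if `p ≡ 3 (mod 8)`. -/
theorem sum_of_squares_residues (p : ℕ) [Fact p.Prime] (hp : Odd p) :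
    (p % 4 = 1 →
      |((∑ x ∈ Finset.univ.filter fun x : ZMod p => x ≠ 0 ∧ IsSquare x, x.val : ℕ) : ℝ) -
          (p : ℝ) * ((p : ℝ) - 1) / 4| ≤ 0) ∧
    (p % 8 = 7 →
      |((∑ x ∈ Finset.univ.filter fun x : ZMod p => x ≠ 0 ∧ IsSquare x, x.val : ℕ) : ℝ) -
          (p : ℝ) * ((p : ℝ) - 1) / 4| ≤ (1 / 2) * (p : ℝ) * Real.sqrt p * Real.log p) ∧
    (p % 8 = 3 →
      |((∑ x ∈ Finset.univ.filter fun x : ZMod p => x ≠ 0 ∧ IsSquare x, x.val : ℕ) : ℝ) -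
          (p : ℝ) * ((p : ℝ) - 1) / 4| ≤ (1 / 6) * (p : ℝ) * Real.sqrt p * Real.log p) := by
  have hS := abs_sum_Icc_quadraticChar_le hp
  obtain ⟨m, rfl⟩ := hp
  rw [sum_val_nonzero_squares_sub_eq]
  push_cast at hS ⊢
  have hp0 : (0 : ℝ) < 2 * m + 1 := by positivity
  have hpS := mul_le_mul_of_nonneg_left (hS m) hp0.le
  refine ⟨fun h => ?_, fun h => ?_, fun h => ?_⟩
  · rw [sum_Icc_natCast_mul_quadraticChar_of_mod_four_eq_one h, zero_div, abs_zero]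
  · rw [sum_Icc_natCast_mul_quadraticChar_of_mod_eight_eq_seven h, abs_div, abs_neg, abs_mul,
      abs_of_pos hp0, abs_two]
    linarith
  · rw [sum_Icc_natCast_mul_quadraticChar_of_mod_eight_eq_three h, abs_div, abs_div, abs_neg,
      abs_mul, abs_of_pos hp0, abs_two, abs_of_pos (by norm_num : (0 : ℝ) < 3)]
    linarith
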